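/- Let $A = \mathbb{Q}[p_1,\dots,p_n, p'_1,\dots,p'_k]$, graded with $\deg p_i = 4i$, $\deg p'_j = 4j$, and let $I$ be the ideal generated by the homogeneous elements $s_\ell = \sum_{i+j=\ell} p_i p'_j$ for $1 \le \ell \le n+k$ (with $p_0 = p'_0 = 1$ and out-of-range variables zero). Then the quotient $A/I$ is a finite-dimensional $\mathbb{Q}$-vector space of dimension $\binom{n+k}{n}$. -/

import Mathlib

/-!
Splitting principle. Write `Z_m(t) = 1 + z₁ t + ⋯ + z_m t^m` for the total class of `m`
variables. Adjoining a root `y`, the substitution `Z_{m+1}(t) ↦ (1 - y t) Z_m(t)` makes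
`A[ρ, z₁, …, z_m][y]` a free module over `A[ρ, z₁, …, z_{m+1}]` with basis `1, y, …, y^m`: after
the triangular change of variables `z_j ↦ z_j - y z_{j-1}` it just substitutes for `z_{m+1}` a
polynomial in `y` of degree `m + 1` with leading coefficient `-1`, and division with remainder
does the rest. So splitting off one root multiplies by `m + 1` the dimension of the quotient by
the coefficients of `G(t) Z_{m+1}(t)`.

Split off `k` roots both from `ℚ[z₁, …, z_{n+k}] ⧸ (Z_{n+k} = 1) ≅ ℚ` and from `A ⧸ I`, where
`P'(t)` plays the role of `Z_k(t)` and `P(t)` is carried along. Both end at the quotient of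
`ℚ[y₁, …, y_k][p₁, …, p_n]` by the coefficients of `∏ (1 - yᵢ t) · P(t)`, so
`(n + k)! / n! = k! · dim (A ⧸ I)`.
-/

open MvPolynomial

/-- Total-class convention: `cls v 0 = 1`, `cls v i = vᵢ` for `1 ≤ i ≤ m`, and
`cls v i = 0` for `i > m`. -/
def cls {A : Type} [CommRing A] {m : ℕ} (v : Fin m → A) : ℕ → A := fun i =>
  if i = 0 then 1 else if h : i - 1 < m then v ⟨i - 1, h⟩ else 0

/-- The polynomial ring `ℚ[p₁,…,p_n, p'₁,…,p'_k]` (graded with `deg pᵢ = 4i`,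
`deg p'ⱼ = 4j`, with respect to which the `s_ℓ` below are homogeneous). -/
abbrev PRing (n k : ℕ) := MvPolynomial (Fin n ⊕ Fin k) ℚ

/-- `s_ℓ = Σ_{i+j=ℓ} pᵢ p'ⱼ`. -/
noncomputable def sPol (n k : ℕ) (ℓ : ℕ) : PRing n k :=
  ∑ ij ∈ Finset.HasAntidiagonal.antidiagonal ℓ,
    cls (fun i : Fin n => X (Sum.inl i)) ij.1 *
      cls (fun j : Fin k => X (Sum.inr j)) ij.2

open scoped Polynomial

section BasisAlong

variable {A A' B B' : Type*} [CommSemiring B] [CommSemiring B'] {ι : Type*} [Fintype ι]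

/-- `B` is a free `A`-module, via `φ`, with basis `b`. -/
def IsBasisAlong (φ : A → B) (b : ι → B) : Prop :=
  Function.Bijective fun v : ι → A => ∑ i, b i * φ (v i)

theorem IsBasisAlong.comp_equiv {φ : A → B} {b : ι → B} (h : IsBasisAlong φ b)
    (e : A' ≃ A) : IsBasisAlong (φ ∘ e) b :=
  h.comp (Equiv.piCongrRight fun _ => e).bijective

theorem IsBasisAlong.ringEquiv_comp {φ : A → B} {b : ι → B} (h : IsBasisAlong φ b)
    (e : B ≃+* B') : IsBasisAlong (e ∘ φ) (e ∘ b) := by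
  have : (fun v : ι → A => ∑ i, (e ∘ b) i * (e ∘ φ) (v i)) =
      e ∘ fun v => ∑ i, b i * φ (v i) := by
    ext v; simp
  rw [IsBasisAlong, this]
  exact e.bijective.comp h

end BasisAlong

namespace Polynomial

variable {R : Type*} [CommRing R] {f : R[X]} {m : ℕ}

theorem sum_X_pow_mul_comp_X_mul_add_C (f : R[X]) (w : Fin m → R[X]) (c : Fin m → R) :
    ∑ t : Fin m, X ^ (t : ℕ) * (X * w t + C (c t)).comp f =
      f * ∑ t : Fin m, X ^ (t : ℕ) * (w t).comp f + ∑ t : Fin m, C (c t) * X ^ (t : ℕ) := by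
  simp only [add_comp, mul_comp, X_comp, C_comp, Finset.mul_sum, ← Finset.sum_add_distrib]
  exact Finset.sum_congr rfl fun t _ => by ring

theorem coeff_sum_C_mul_X_pow (c : Fin m → R) (t : Fin m) :
    (∑ s : Fin m, C (c s) * X ^ (s : ℕ)).coeff t = c t := by
  simp [Fin.val_inj]

theorem sum_C_coeff_mul_X_pow {p : R[X]} (hp : p.natDegree < m) :
    ∑ t : Fin m, C (p.coeff t) * X ^ (t : ℕ) = p :=
  (Fin.sum_univ_eq_sum_range (fun t => C (p.coeff t) * X ^ t) m).trans
    (as_sum_range_C_mul_X_pow' p hp).symm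

theorem degree_eq_of_monic_natDegree_pos (hf : f.Monic) (hm : f.natDegree = m) (h0 : 0 < m) :
    f.degree = m := by
  have : Nontrivial R := nontrivial_iff.mp ⟨⟨f, 0, by rintro rfl; simp at hm; omega⟩⟩
  rw [degree_eq_natDegree hf.ne_zero, hm]

theorem natDegree_modByMonic_lt_of_natDegree_pos (hf : f.Monic) (hm : f.natDegree = m)
    (h0 : 0 < m) (p : R[X]) : (p %ₘ f).natDegree < m :=
  hm ▸ natDegree_modByMonic_lt p hf (by rintro rfl; simp at hm; omega)

theorem sum_X_pow_mul_comp_divX_eq_zero (hf : f.Monic) (hm : f.natDegree = m) (h0 : 0 < m)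
    {v : Fin m → R[X]} (hv : ∑ t : Fin m, X ^ (t : ℕ) * (v t).comp f = 0) :
    (∑ t : Fin m, X ^ (t : ℕ) * (divX (v t)).comp f = 0) ∧ ∀ t, (v t).coeff 0 = 0 := by
  have hsplit :=
    sum_X_pow_mul_comp_X_mul_add_C f (fun t => divX (v t)) (fun t => (v t).coeff 0)
  simp only [X_mul_divX_add, hv] at hsplit
  obtain ⟨hq, hr⟩ := div_modByMonic_unique (f := 0) _ _ hf
    ⟨(add_comm _ _).trans hsplit.symm,
      degree_eq_of_monic_natDegree_pos hf hm h0 ▸ degree_sum_fin_lt _⟩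
  refine ⟨by simpa using hq.symm, fun t => ?_⟩
  rw [← coeff_sum_C_mul_X_pow (fun t => (v t).coeff 0) t, ← hr, zero_modByMonic, coeff_zero]

theorem eq_zero_of_sum_X_pow_mul_comp_eq_zero (hf : f.Monic) (hm : f.natDegree = m)
    (h0 : 0 < m) {v : Fin m → R[X]} (hv : ∑ t : Fin m, X ^ (t : ℕ) * (v t).comp f = 0) :
    v = 0 := by
  suffices key : ∀ D, ∀ v : Fin m → R[X], (∀ t, (v t).natDegree ≤ D) →
      ∑ t : Fin m, X ^ (t : ℕ) * (v t).comp f = 0 → v = 0 from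
    key _ v (fun t => Finset.le_sup (f := fun t => (v t).natDegree) (Finset.mem_univ t)) hv
  intro D
  induction D with
  | zero =>
    intro v hD hv
    funext t
    rw [eq_C_of_natDegree_le_zero (hD t), (sum_X_pow_mul_comp_divX_eq_zero hf hm h0 hv).2 t,
      Pi.zero_apply, C_0]
  | succ D ih =>
    intro v hD hv
    obtain ⟨hdivX, hcoeff⟩ := sum_X_pow_mul_comp_divX_eq_zero hf hm h0 hv
    have hdivX_zero := ih (fun t => divX (v t))
      (fun t => by rw [natDegree_divX_eq_natDegree_tsub_one]; have := hD t; omega) hdivX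
    funext t
    rw [← X_mul_divX_add (v t), congrFun hdivX_zero t, hcoeff t]
    simp

theorem isBasisAlong_comp (hf : f.Monic) (hm : f.natDegree = m) (h0 : 0 < m) :
    IsBasisAlong (fun p : R[X] => p.comp f) fun t : Fin m => (X : R[X]) ^ (t : ℕ) := by
  simp only [IsBasisAlong]
  refine ⟨fun v v' hvv' =>
    sub_eq_zero.mp (eq_zero_of_sum_X_pow_mul_comp_eq_zero hf hm h0 ?_), ?_⟩
  · simp [sub_comp, mul_sub, Finset.sum_sub_distrib, hvv']
  intro p
  induction hd : p.natDegree using Nat.strong_induction_on generalizing p with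
  | _ d ih =>
    by_cases hdm : d < m
    · exact ⟨fun t => C (p.coeff t), by simpa using sum_C_coeff_mul_X_pow (hd ▸ hdm)⟩
    obtain ⟨w, hw⟩ := ih _ (by rw [natDegree_divByMonic _ hf, hd, hm]; omega) (p /ₘ f) rfl
    refine ⟨fun t => X * w t + C ((p %ₘ f).coeff t), ?_⟩
    simp only at hw ⊢
    rw [sum_X_pow_mul_comp_X_mul_add_C, hw,
      sum_C_coeff_mul_X_pow (natDegree_modByMonic_lt_of_natDegree_pos hf hm h0 p), add_comm,
      modByMonic_add_div]

theorem isBasisAlong_comp_neg (hf : f.Monic) (hm : f.natDegree = m) (h0 : 0 < m) :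
    IsBasisAlong (fun p : R[X] => p.comp (-f)) fun t : Fin m => (X : R[X]) ^ (t : ℕ) := by
  convert (isBasisAlong_comp hf hm h0).comp_equiv algEquivAevalNegX.toEquiv using 1
  ext p : 1
  simp [algEquivAevalNegX, ← comp_eq_aeval, comp_assoc]

end Polynomial

section QuotientTransfer

variable {K A B : Type*} [CommRing K] [CommRing A] [CommRing B] [Algebra K A] [Algebra K B]
  {ι : Type*} [Fintype ι]

noncomputable def basisCombination (φ : A →ₐ[K] B) (b : ι → B) : (ι → A) →ₗ[K] B :=
  ∑ i, LinearMap.mulLeft K (b i) ∘ₗ φ.toLinearMap ∘ₗ LinearMap.proj i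

theorem basisCombination_apply (φ : A →ₐ[K] B) (b : ι → B) (v : ι → A) :
    basisCombination φ b v = ∑ i, b i * φ (v i) := by
  simp [basisCombination]

theorem IsBasisAlong.mul_mem_map_pi {φ : A →ₐ[K] B} {b : ι → B}
    (h : IsBasisAlong φ b) (I : Ideal A) (c : B) {a : A} (ha : a ∈ I) :
    c * φ a ∈ (Submodule.pi Set.univ fun _ => I.restrictScalars K).map (basisCombination φ b) := by
  obtain ⟨w, rfl⟩ := h.2 c
  refine ⟨fun i => w i * a, fun i _ => I.mul_mem_left _ ha, ?_⟩
  simp [basisCombination_apply, Finset.sum_mul, mul_assoc]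

theorem IsBasisAlong.restrictScalars_map {φ : A →ₐ[K] B} {b : ι → B}
    (h : IsBasisAlong φ b) (I : Ideal A) :
    (Submodule.pi Set.univ fun _ => I.restrictScalars K).map (basisCombination φ b) =
      (I.map φ).restrictScalars K := by
  set S := (Submodule.pi Set.univ fun _ => I.restrictScalars K).map (basisCombination φ b)
  refine le_antisymm ?_ ?_
  · rintro _ ⟨v, hv, rfl⟩
    rw [basisCombination_apply]
    exact Ideal.sum_mem _ fun i _ =>
      Ideal.mul_mem_left _ _ (Ideal.mem_map_of_mem φ (hv i trivial))
  · let J : Ideal B :=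
      { toAddSubmonoid := S.toAddSubmonoid
        smul_mem' := by
          rintro c _ ⟨v, hv, rfl⟩
          simp only [smul_eq_mul, basisCombination_apply, Finset.mul_sum, ← mul_assoc]
          exact S.sum_mem fun i _ => h.mul_mem_map_pi I _ (hv i trivial) }
    have hJ : I.map φ ≤ J := Ideal.map_le_iff_le_comap.mpr fun a ha => by
      have := h.mul_mem_map_pi I 1 ha
      rwa [one_mul] at this
    exact fun x hx => hJ hx

end QuotientTransfer

section QuotientTransferField

theorem Module.finrank_fun_eq_card_mul (K W : Type*) [Field K] [AddCommGroup W] [Module K W]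
    (ι : Type*) [Fintype ι] :
    Module.finrank K (ι → W) = Fintype.card ι * Module.finrank K W := by
  simp [Module.finrank]

variable {K A B : Type*} [Field K] [CommRing A] [CommRing B] [Algebra K A] [Algebra K B]
  {ι : Type*} [Fintype ι]

theorem IsBasisAlong.finrank_quotient_map {φ : A →ₐ[K] B} {b : ι → B} (h : IsBasisAlong φ b)
    (I : Ideal A) :
    Module.finrank K (B ⧸ I.map φ) = Fintype.card ι * Module.finrank K (A ⧸ I) := by
  classical
  have hbij : Function.Bijective (basisCombination φ b) := by
    have : ⇑(basisCombination φ b) = fun v => ∑ i, b i * φ (v i) := by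
      ext v; simp [basisCombination_apply]
    exact this ▸ h
  rw [← Module.finrank_fun_eq_card_mul]
  exact LinearEquiv.finrank_eq <|
    (Submodule.Quotient.restrictScalarsEquiv K _).symm ≪≫ₗ
      (Submodule.Quotient.equiv _ _ (LinearEquiv.ofBijective _ hbij)
        (h.restrictScalars_map I)).symm ≪≫ₗ
      Submodule.quotientPi _ ≪≫ₗ
      LinearEquiv.piCongrRight fun _ => Submodule.Quotient.restrictScalarsEquiv K I

end QuotientTransferField

theorem MvPolynomial.finrank_quotient_idealOfVars (K σ : Type*) [Field K] :
    Module.finrank K (MvPolynomial σ K ⧸ MvPolynomial.idealOfVars σ K) = 1 := by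
  let φ : MvPolynomial σ K →ₐ[K] K := MvPolynomial.aeval 0
  have hker : RingHom.ker φ = MvPolynomial.idealOfVars σ K := by
    ext p
    rw [RingHom.mem_ker, ← pow_one (idealOfVars σ K), mem_pow_idealOfVars_iff']
    simp only [Nat.lt_one_iff, Finsupp.degree_eq_zero_iff, forall_eq]
    simp [φ, MvPolynomial.aeval_zero, MvPolynomial.constantCoeff_eq]
  have e := Ideal.quotientKerAlgEquivOfSurjective (f := φ) (fun c => ⟨C c, by simp [φ]⟩)
  rw [← hker]
  exact e.toLinearEquiv.finrank_eq.trans (Module.finrank_self K)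

section TotalClass

variable {R S : Type} [CommRing R] [CommRing S] {m : ℕ}

theorem cls_succ_of_lt (v : Fin m → R) {j : ℕ} (hj : j < m) : cls v (j + 1) = v ⟨j, hj⟩ := by
  simp [cls, hj]

theorem cls_eq_zero (v : Fin m → R) {i : ℕ} (hi : m < i) : cls v i = 0 := by
  simp [cls, show i ≠ 0 by omega, show ¬ i - 1 < m by omega]

theorem map_cls {F : Type*} [FunLike F R S] [RingHomClass F R S] (f : F) (v : Fin m → R)
    (i : ℕ) : f (cls v i) = cls (fun j => f (v j)) i := by
  unfold cls
  split_ifs <;> simp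

noncomputable def totalClass (v : Fin m → R) : R[X] :=
  ∑ i ∈ Finset.range (m + 1), Polynomial.C (cls v i) * Polynomial.X ^ i

theorem coeff_totalClass (v : Fin m → R) (i : ℕ) : (totalClass v).coeff i = cls v i := by
  simp only [totalClass, Polynomial.finsetSum_coeff, Polynomial.coeff_C_mul_X_pow,
    Finset.sum_ite_eq, Finset.mem_range]
  split_ifs with hi
  · rfl
  · exact (cls_eq_zero v (by omega)).symm

theorem totalClass_fin_zero (v : Fin 0 → R) : totalClass v = 1 := by
  simp [totalClass, cls]

theorem map_totalClass (f : R →+* S) (v : Fin m → R) :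
    (totalClass v).map f = totalClass fun j => f (v j) := by
  ext i
  rw [Polynomial.coeff_map, coeff_totalClass, coeff_totalClass, map_cls]

def coeffSpan (F : R[X]) (N : ℕ) : Ideal R :=
  Ideal.span (Set.range fun ℓ : Fin N => F.coeff (ℓ + 1))

theorem map_coeffSpan (f : R →+* S) (F : R[X]) (N : ℕ) :
    (coeffSpan F N).map f = coeffSpan (F.map f) N := by
  simp only [coeffSpan, Ideal.map_span, ← Set.range_comp, Function.comp_def,
    Polynomial.coeff_map]

end TotalClass

def sumFinSuccEquiv (ρ : Type) (m : ℕ) : ρ ⊕ Fin (m + 1) ≃ Option (ρ ⊕ Fin m) :=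
  (Equiv.sumCongr (Equiv.refl ρ) (finSuccEquivLast.trans (Equiv.optionEquivSumPUnit.{0} _))).trans
    ((Equiv.sumAssoc _ _ _).symm.trans (Equiv.optionEquivSumPUnit _).symm)

noncomputable def coeffVarEquiv (A : Type) [CommRing A] (σ : Type) :
    MvPolynomial σ A[X] ≃ₐ[A] (MvPolynomial σ A)[X] :=
  (MvPolynomial.optionEquivRight A σ).symm.trans (MvPolynomial.optionEquivLeft A σ)

section CoeffVarEquiv

variable {A : Type} [CommRing A] {σ : Type}

theorem coeffVarEquiv_C_X : coeffVarEquiv A σ (C Polynomial.X) = Polynomial.X := by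
  simp [coeffVarEquiv]

theorem coeffVarEquiv_X (s : σ) : coeffVarEquiv A σ (X s) = Polynomial.C (X s) := by
  simp [coeffVarEquiv]

theorem coeffVarEquiv_symm_X : (coeffVarEquiv A σ).symm Polynomial.X = C Polynomial.X :=
  (AlgEquiv.symm_apply_eq _).mpr coeffVarEquiv_C_X.symm

theorem coeffVarEquiv_symm_C_X (s : σ) : (coeffVarEquiv A σ).symm (Polynomial.C (X s)) = X s :=
  (AlgEquiv.symm_apply_eq _).mpr (coeffVarEquiv_X s).symm

end CoeffVarEquiv

section Splitting

variable (A : Type) [CommRing A] (ρ : Type) (m : ℕ)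

noncomputable def splitCls (i : ℕ) : MvPolynomial (ρ ⊕ Fin m) A :=
  cls (fun j => X (Sum.inr j)) i

noncomputable def splitClass : (MvPolynomial (ρ ⊕ Fin m) A)[X] :=
  totalClass fun j => X (Sum.inr j)

variable {A ρ m}

theorem coeff_splitClass (i : ℕ) : (splitClass A ρ m).coeff i = splitCls A ρ m i :=
  coeff_totalClass _ i

theorem splitCls_zero : splitCls A ρ m 0 = 1 := rfl

theorem splitCls_succ {j : ℕ} (hj : j < m) : splitCls A ρ m (j + 1) = X (Sum.inr ⟨j, hj⟩) :=
  cls_succ_of_lt _ hj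

theorem splitCls_eq_zero {i : ℕ} (hi : m < i) : splitCls A ρ m i = 0 :=
  cls_eq_zero _ hi

variable (A ρ m)

noncomputable def splitHom :
    MvPolynomial (ρ ⊕ Fin (m + 1)) A →ₐ[A] MvPolynomial (ρ ⊕ Fin m) A[X] :=
  MvPolynomial.aeval <| Sum.elim (fun r => X (Sum.inl r)) fun j =>
    splitCls A[X] ρ m (j + 1) - C Polynomial.X * splitCls A[X] ρ m j

variable {A ρ m}

theorem splitHom_splitCls_succ (j : ℕ) :
    splitHom A ρ m (splitCls A ρ (m + 1) (j + 1)) =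
      splitCls A[X] ρ m (j + 1) - C Polynomial.X * splitCls A[X] ρ m j := by
  by_cases hj : j < m + 1
  · rw [splitCls_succ hj, splitHom, MvPolynomial.aeval_X, Sum.elim_inr]
  · rw [splitCls_eq_zero (by omega), splitCls_eq_zero (by omega), splitCls_eq_zero (by omega),
      map_zero, mul_zero, sub_zero]

theorem map_splitClass :
    (splitClass A ρ (m + 1)).map (splitHom A ρ m).toRingHom =
      (1 - Polynomial.C (C Polynomial.X) * Polynomial.X) * splitClass A[X] ρ m := by
  refine Polynomial.ext fun i => ?_
  rcases i with _ | j
  · simp [coeff_splitClass, splitCls_zero]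
  · simp [coeff_splitClass, sub_mul, mul_assoc, Polynomial.coeff_C_mul, Polynomial.coeff_X_mul,
      splitHom_splitCls_succ]

variable (A ρ m)

/-- The coefficients of `Z_m(t) / (1 - y t)`, where `y = C X`. -/
noncomputable def quotCls (j : ℕ) : MvPolynomial (ρ ⊕ Fin m) A[X] :=
  ∑ i ∈ Finset.range (j + 1), C Polynomial.X ^ i * splitCls A[X] ρ m (j - i)

noncomputable def shiftHom :
    MvPolynomial (ρ ⊕ Fin m) A[X] →ₐ[A[X]] MvPolynomial (ρ ⊕ Fin m) A[X] :=
  MvPolynomial.aeval <| Sum.elim (fun r => X (Sum.inl r)) fun j =>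
    splitCls A[X] ρ m (j + 1) - C Polynomial.X * splitCls A[X] ρ m j

noncomputable def unshiftHom :
    MvPolynomial (ρ ⊕ Fin m) A[X] →ₐ[A[X]] MvPolynomial (ρ ⊕ Fin m) A[X] :=
  MvPolynomial.aeval <| Sum.elim (fun r => X (Sum.inl r)) fun j => quotCls A ρ m (j + 1)

variable {A ρ m}

theorem quotCls_zero : quotCls A ρ m 0 = 1 := by
  simp [quotCls, splitCls_zero]

theorem quotCls_succ (j : ℕ) :
    quotCls A ρ m (j + 1) = splitCls A[X] ρ m (j + 1) + C Polynomial.X * quotCls A ρ m j := by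
  rw [quotCls, Finset.sum_range_succ', quotCls, Finset.mul_sum, add_comm]
  congr 1
  · simp
  · refine Finset.sum_congr rfl fun i _ => ?_
    rw [pow_succ, Nat.add_sub_add_right, mul_comm (_ ^ i), mul_assoc]

theorem shiftHom_splitCls_succ {j : ℕ} (hj : j < m) :
    shiftHom A ρ m (splitCls A[X] ρ m (j + 1)) =
      splitCls A[X] ρ m (j + 1) - C Polynomial.X * splitCls A[X] ρ m j := by
  conv_lhs => rw [splitCls_succ hj, shiftHom, MvPolynomial.aeval_X, Sum.elim_inr]

theorem shiftHom_C (p : A[X]) : shiftHom A ρ m (C p) = C p :=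
  (shiftHom A ρ m).commutes p

theorem shiftHom_quotCls {j : ℕ} (hj : j ≤ m) :
    shiftHom A ρ m (quotCls A ρ m j) = splitCls A[X] ρ m j := by
  induction j with
  | zero => rw [quotCls_zero, map_one, splitCls_zero]
  | succ j ih =>
    rw [quotCls_succ, map_add, map_mul, ih (by omega), shiftHom_splitCls_succ (by omega),
      shiftHom_C, sub_add_cancel]

theorem unshiftHom_splitCls {j : ℕ} (hj : j ≤ m) :
    unshiftHom A ρ m (splitCls A[X] ρ m j) = quotCls A ρ m j := by
  rcases j with _ | j
  · rw [splitCls_zero, map_one, quotCls_zero]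
  · rw [splitCls_succ (by omega), unshiftHom, MvPolynomial.aeval_X, Sum.elim_inr]

variable (A ρ m)

noncomputable def shiftEquiv :
    MvPolynomial (ρ ⊕ Fin m) A[X] ≃ₐ[A[X]] MvPolynomial (ρ ⊕ Fin m) A[X] :=
  AlgEquiv.ofAlgHom (shiftHom A ρ m) (unshiftHom A ρ m)
    (MvPolynomial.algHom_ext fun
      | .inl r => by simp [shiftHom, unshiftHom]
      | .inr j => by
        rw [AlgHom.comp_apply, unshiftHom, MvPolynomial.aeval_X, Sum.elim_inr,
          shiftHom_quotCls j.isLt, splitCls_succ j.isLt, AlgHom.id_apply])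
    (MvPolynomial.algHom_ext fun
      | .inl r => by simp [shiftHom, unshiftHom]
      | .inr j => by
        rw [AlgHom.comp_apply, shiftHom, MvPolynomial.aeval_X, Sum.elim_inr, map_sub, map_mul,
          unshiftHom_splitCls j.isLt, unshiftHom_splitCls j.isLt.le,
          ← MvPolynomial.algebraMap_eq, AlgHom.commutes, MvPolynomial.algebraMap_eq, quotCls_succ,
          add_sub_cancel_right, splitCls_succ j.isLt, AlgHom.id_apply])

theorem shiftEquiv_apply (p : MvPolynomial (ρ ⊕ Fin m) A[X]) :
    shiftEquiv A ρ m p = shiftHom A ρ m p := rfl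

noncomputable def lastVarEquiv :
    MvPolynomial (ρ ⊕ Fin (m + 1)) A ≃ₐ[A] (MvPolynomial (ρ ⊕ Fin m) A)[X] :=
  (MvPolynomial.renameEquiv A (sumFinSuccEquiv ρ m)).trans (MvPolynomial.optionEquivLeft A _)

noncomputable def revCls : (MvPolynomial (ρ ⊕ Fin m) A)[X] :=
  ∑ i ∈ Finset.range (m + 1), Polynomial.C (splitCls A ρ m (m - i)) * Polynomial.X ^ i

variable {A ρ m}

theorem coeffVarEquiv_splitCls (i : ℕ) :
    coeffVarEquiv A _ (splitCls A[X] ρ m i) = Polynomial.C (splitCls A ρ m i) := by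
  simp only [splitCls, map_cls, coeffVarEquiv_X]

theorem coeffVarEquiv_quotCls :
    coeffVarEquiv A _ (quotCls A ρ m m) = revCls A ρ m := by
  simp only [quotCls, revCls, map_sum, map_mul, map_pow, coeffVarEquiv_C_X,
    coeffVarEquiv_splitCls, mul_comm]

theorem natDegree_revCls_le : (revCls A ρ m).natDegree ≤ m :=
  Polynomial.natDegree_sum_le_of_forall_le _ _ fun _ hi =>
    (Polynomial.natDegree_C_mul_X_pow_le _ _).trans (Finset.mem_range_succ_iff.mp hi)

theorem coeff_revCls_self : (revCls A ρ m).coeff m = 1 := by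
  simp [revCls, splitCls_zero]

theorem monic_revCls : (revCls A ρ m).Monic :=
  Polynomial.monic_of_natDegree_le_of_coeff_eq_one m natDegree_revCls_le coeff_revCls_self

theorem natDegree_X_mul_revCls [Nontrivial A] :
    (Polynomial.X * revCls A ρ m).natDegree = m + 1 := by
  rw [Polynomial.natDegree_X_mul monic_revCls.ne_zero,
    Polynomial.natDegree_eq_of_le_of_coeff_ne_zero natDegree_revCls_le (by simp [coeff_revCls_self])]

/-- After the change of variables `shiftEquiv`, `splitHom` only substitutes
`-(X * revCls)` for the last variable. -/
theorem splitHom_eq_comp :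
    ⇑(splitHom A ρ m) = shiftEquiv A ρ m ∘ (coeffVarEquiv A _).symm ∘
      (fun p => p.comp (-(Polynomial.X * revCls A ρ m))) ∘ lastVarEquiv A ρ m := by
  suffices splitHom A ρ m = ((shiftEquiv A ρ m).toAlgHom.restrictScalars A).comp
      ((coeffVarEquiv A _).symm.toAlgHom.comp
        (((Polynomial.aeval (-(Polynomial.X * revCls A ρ m))).restrictScalars A).comp
          (lastVarEquiv A ρ m).toAlgHom)) by
    rw [this]; funext p; simp [Polynomial.comp_eq_aeval]
  refine MvPolynomial.algHom_ext fun
    | .inl r => ?_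
    | .inr j => ?_
  · simp [splitHom, lastVarEquiv, sumFinSuccEquiv, coeffVarEquiv_symm_C_X, shiftEquiv, shiftHom]
  induction j using Fin.lastCases with
  | last =>
    simp [splitHom, lastVarEquiv, sumFinSuccEquiv, shiftEquiv_apply, coeffVarEquiv_symm_X,
      ← coeffVarEquiv_quotCls, shiftHom_quotCls le_rfl, splitCls_eq_zero (Nat.lt_succ_self m)]
  | cast i =>
    simp [splitHom, lastVarEquiv, sumFinSuccEquiv, coeffVarEquiv_symm_C_X, shiftEquiv_apply,
      shiftHom]

theorem isBasisAlong_splitHom [Nontrivial A] :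
    IsBasisAlong (splitHom A ρ m) fun t : Fin (m + 1) => (C Polynomial.X) ^ (t : ℕ) := by
  have h := (((Polynomial.isBasisAlong_comp_neg (Polynomial.monic_X.mul monic_revCls)
    natDegree_X_mul_revCls
    (Nat.succ_pos m)).comp_equiv (lastVarEquiv A ρ m).toEquiv).ringEquiv_comp
      (coeffVarEquiv A _).symm.toRingEquiv).ringEquiv_comp (shiftEquiv A ρ m).toRingEquiv
  rw [splitHom_eq_comp]
  convert h using 1
  · rfl
  · funext t
    simp [coeffVarEquiv_symm_X, shiftEquiv_apply]

end Splitting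

section Tower

variable {A : Type} [CommRing A] {ρ : Type} {m : ℕ}

abbrev SplitQuotient (A : Type) [CommRing A] (ρ : Type) (m : ℕ) (G : (MvPolynomial ρ A)[X])
    (N : ℕ) :=
  MvPolynomial (ρ ⊕ Fin m) A ⧸
    coeffSpan (G.map (rename Sum.inl).toRingHom * splitClass A ρ m) N

theorem splitHom_comp_rename_inl :
    (splitHom A ρ m).toRingHom.comp (rename Sum.inl).toRingHom =
      (rename Sum.inl).toRingHom.comp (MvPolynomial.map Polynomial.C) :=
  MvPolynomial.ringHom_ext (fun a => by simp [splitHom]) fun r => by simp [splitHom]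

theorem map_coeffSpan_splitHom (G : (MvPolynomial ρ A)[X]) (N : ℕ) :
    (coeffSpan (G.map (rename Sum.inl).toRingHom * splitClass A ρ (m + 1)) N).map
        (splitHom A ρ m).toRingHom =
      coeffSpan (((1 - Polynomial.C (C Polynomial.X) * Polynomial.X) *
        G.map (MvPolynomial.map Polynomial.C)).map (rename Sum.inl).toRingHom *
          splitClass A[X] ρ m) N := by
  rw [map_coeffSpan, Polynomial.map_mul, map_splitClass, Polynomial.map_map,
    splitHom_comp_rename_inl, ← Polynomial.map_map, Polynomial.map_mul]
  refine congrArg (coeffSpan · N) ?_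
  simp only [Polynomial.map_mul, Polynomial.map_sub, Polynomial.map_one, Polynomial.map_C,
    Polynomial.map_X, AlgHom.toRingHom_eq_coe, RingHom.coe_coe, rename_C]
  ring

theorem finrank_splitQuotient_succ (K : Type*) [Field K] [Algebra K A] [Nontrivial A]
    (G : (MvPolynomial ρ A)[X]) (N : ℕ) :
    Module.finrank K (SplitQuotient A[X] ρ m
        ((1 - Polynomial.C (C Polynomial.X) * Polynomial.X) *
          G.map (MvPolynomial.map Polynomial.C)) N) =
      (m + 1) * Module.finrank K (SplitQuotient A ρ (m + 1) G N) := by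
  have := (isBasisAlong_splitHom (A := A) (ρ := ρ) (m := m)).finrank_quotient_map
    (φ := (splitHom A ρ m).restrictScalars K)
    (coeffSpan (G.map (rename Sum.inl).toRingHom * splitClass A ρ (m + 1)) N)
  have hmap : ∀ I : Ideal (MvPolynomial (ρ ⊕ Fin (m + 1)) A),
      I.map ((splitHom A ρ m).restrictScalars K) = I.map (splitHom A ρ m).toRingHom :=
    fun _ => rfl
  rwa [Fintype.card_fin, hmap, map_coeffSpan_splitHom] at this

theorem finrank_quotient_coeffSpan_rename (K : Type*) [Field K] [Algebra K A] {σ τ : Type}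
    (e : σ ≃ τ) (F : (MvPolynomial σ A)[X]) (N : ℕ) :
    Module.finrank K (MvPolynomial σ A ⧸ coeffSpan F N) =
      Module.finrank K (MvPolynomial τ A ⧸ coeffSpan (F.map (rename e).toRingHom) N) :=
  (Ideal.quotientEquivAlg _ _ ((renameEquiv A e).restrictScalars K)
    (map_coeffSpan _ F N).symm).toLinearEquiv.finrank_eq

theorem map_map_C_algHom {σ τ : Type} (f : MvPolynomial σ A →ₐ[A] MvPolynomial τ A)
    (E : A[X]) :
    (E.map C).map f.toRingHom = E.map C := by
  rw [Polynomial.map_map]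
  exact congrArg (E.map ·) (RingHom.ext (MvPolynomial.algHom_C f))

theorem one_sub_mul_map_map_C (σ : Type) (E : A[X]) :
    (1 - Polynomial.C (C Polynomial.X) * Polynomial.X) *
        (E.map (C : A →+* MvPolynomial σ A)).map (MvPolynomial.map Polynomial.C) =
      ((1 - Polynomial.C Polynomial.X * Polynomial.X) * E.map Polynomial.C).map C := by
  simp [Polynomial.map_map, MvPolynomial.map_comp_C]

theorem map_totalClass_X {B : Type} [CommRing B] (f : A →+* B) (n : ℕ) :
    (totalClass fun i : Fin n => (X i : MvPolynomial (Fin n) A)).map (MvPolynomial.map f) =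
      totalClass fun i => X i := by
  simp [map_totalClass]

theorem factorial_mul_finrank_eq (K : Type*) [Field K] (n N q : ℕ) (A : Type) [CommRing A]
    [Nontrivial A] [Algebra K A] (E : A[X]) :
    (n + q).factorial * Module.finrank K (SplitQuotient A (Fin 0) (n + q) (E.map C) N) =
      n.factorial * q.factorial *
        Module.finrank K (SplitQuotient A (Fin n) q (E.map C * totalClass fun i => X i) N) := by
  induction q generalizing A with
  | zero =>
    -- both sides are the same quotient, up to swapping the two blocks of variables
    have hpoly : ((E.map C).map (rename Sum.inl).toRingHom * splitClass A (Fin 0) n).map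
        (rename (Equiv.sumComm (Fin 0) (Fin n))).toRingHom =
        (E.map C * totalClass fun i => X i).map (rename Sum.inl).toRingHom *
          splitClass A (Fin n) 0 := by
      simp only [splitClass, Polynomial.map_mul, map_map_C_algHom, map_totalClass,
        totalClass_fin_zero, mul_one]
      simp
    rw [Nat.add_zero, Nat.factorial_zero, mul_one,
      finrank_quotient_coeffSpan_rename K (Equiv.sumComm (Fin 0) (Fin n)), hpoly]
  | succ q ih =>
    -- split one root off on both sides, then apply the induction hypothesis over `A[X]`
    have h1 := finrank_splitQuotient_succ (ρ := Fin 0) (m := n + q) K (E.map C) N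
    have h2 := finrank_splitQuotient_succ (ρ := Fin n) (m := q) K
      (E.map C * totalClass fun i => X i) N
    rw [one_sub_mul_map_map_C] at h1
    rw [Polynomial.map_mul, map_totalClass_X, ← mul_assoc, one_sub_mul_map_map_C] at h2
    have := ih A[X] ((1 - Polynomial.C Polynomial.X * Polynomial.X) * E.map Polynomial.C)
    rw [h1, h2] at this
    show (n + q + 1).factorial *
      Module.finrank K (SplitQuotient A (Fin 0) (n + q + 1) (E.map C) N) = _
    rw [Nat.factorial_succ, Nat.factorial_succ]
    linarith

end Tower

theorem coeffSpan_splitClass {A ρ : Type} [CommRing A] (m : ℕ) :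
    coeffSpan (splitClass A ρ m) m = Ideal.span (Set.range fun j : Fin m => X (Sum.inr j)) := by
  simp only [coeffSpan, coeff_splitClass]
  congr! with j
  exact splitCls_succ j.isLt

theorem finrank_splitQuotient_fin_zero (K : Type) [Field K] (M : ℕ) :
    Module.finrank K (SplitQuotient K (Fin 0) M ((1 : K[X]).map C) M) = 1 := by
  have hsurj : Function.Surjective (Sum.inr : Fin M → Fin 0 ⊕ Fin M) := by
    rintro (i | j)
    · exact i.elim0
    · exact ⟨j, rfl⟩
  have hI : coeffSpan (((1 : K[X]).map C).map (rename Sum.inl).toRingHom *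
      splitClass K (Fin 0) M) M = MvPolynomial.idealOfVars _ K := by
    rw [Polynomial.map_one, Polynomial.map_one, one_mul, coeffSpan_splitClass]
    exact congrArg Ideal.span (hsurj.range_comp X)
  simp only [SplitQuotient]
  rw [hI]
  exact MvPolynomial.finrank_quotient_idealOfVars K _

theorem finrank_quotient_coeffSpan_totalClass_mul (K : Type) [Field K] (n k : ℕ) :
    Module.finrank K (MvPolynomial (Fin n ⊕ Fin k) K ⧸
        coeffSpan (totalClass (fun i => X (Sum.inl i)) * totalClass fun j => X (Sum.inr j))
          (n + k)) =
      (n + k).choose n := by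
  have htower := factorial_mul_finrank_eq K n (n + k) k K 1
  have hpoly : (((1 : K[X]).map C * totalClass fun i => X i).map (rename Sum.inl).toRingHom *
      splitClass K (Fin n) k) =
      (totalClass (fun i => X (Sum.inl i)) * totalClass fun j => X (Sum.inr j)) := by
    simp [map_totalClass, splitClass]
  rw [finrank_splitQuotient_fin_zero, mul_one] at htower
  simp only [SplitQuotient] at htower
  rw [hpoly] at htower
  refine Nat.eq_of_mul_eq_mul_left (Nat.mul_pos n.factorial_pos k.factorial_pos) ?_
  rw [← htower, ← Nat.choose_mul_factorial_mul_factorial (Nat.le_add_right n k),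
    Nat.add_sub_cancel_left]
  ring

theorem sPol_eq_coeff (n k ℓ : ℕ) :
    sPol n k ℓ =
      (totalClass (fun i => X (Sum.inl i)) * totalClass fun j => X (Sum.inr j)).coeff ℓ := by
  simp [sPol, Polynomial.coeff_mul, coeff_totalClass]

/-- The quotient of `A = ℚ[p₁,…,p_n,p'₁,…,p'_k]` by the ideal
generated by `s_ℓ = Σ_{i+j=ℓ} pᵢp'ⱼ`, `1 ≤ ℓ ≤ n+k`, is a finite-dimensional
`ℚ`-vector space of dimension `(n+k choose n)`. -/
theorem cohomology_of_grassmannian_dimension (n k : ℕ) :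
    FiniteDimensional ℚ
        (PRing n k ⧸ Ideal.span
          (Set.range fun ℓ : Fin (n + k) => sPol n k (ℓ.1 + 1))) ∧
      Module.finrank ℚ
          (PRing n k ⧸ Ideal.span
            (Set.range fun ℓ : Fin (n + k) => sPol n k (ℓ.1 + 1))) =
        Nat.choose (n + k) n := by
  have hspan : Ideal.span (Set.range fun ℓ : Fin (n + k) => sPol n k (ℓ.1 + 1)) =
      coeffSpan (totalClass (fun i => X (Sum.inl i)) * totalClass fun j => X (Sum.inr j))
        (n + k) := by
    simp only [coeffSpan, sPol_eq_coeff]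
  have hdim := finrank_quotient_coeffSpan_totalClass_mul ℚ n k
  rw [hspan]
  exact ⟨Module.finite_of_finrank_pos (hdim ▸ Nat.choose_pos (Nat.le_add_right n k)), hdim⟩
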